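/- With U a finite set, S a finite family of subsets covering U, and OPT the optimum cover size, after the greedy algorithm has made t selections, the number of still-uncovered elements is at most |U| · (1 − 1/OPT)^t. Consequently the greedy algorithm makes at most ⌈OPT · ln |U|⌉ + OPT selections. -/

import Mathlib

/-! Let `T` be an optimal cover, `R` the elements still uncovered and `g` the next greedy choice.
The sets of `T` cover `R`, and none of them meets `R` in more elements than `g` does, so
`|R| ≤ |T| · |R ∩ g|`: each greedy step shrinks the uncovered set by the factor `1 − 1/OPT`.
If the greedy algorithm makes `L + 1` selections, an element is still uncovered after `L` of
them, so `1 ≤ |U| (1 − 1/OPT)^L ≤ |U| e^{-L/OPT}`, that is `L ≤ OPT · ln |U|`. -/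

open Finset

def unionList {α : Type*} [DecidableEq α] (l : List (Finset α)) : Finset α :=
  l.foldr (· ∪ ·) ∅

theorem unionList_concat {α : Type*} [DecidableEq α] (l : List (Finset α)) (a : Finset α) :
    unionList (l ++ [a]) = unionList l ∪ a := by
  induction l with
  | nil => simp [unionList]
  | cons b l ih => simp_all only [unionList, List.cons_append, List.foldr_cons, union_assoc]

theorem sdiff_unionList_take_succ {α : Type*} [DecidableEq α] (U : Finset α)
    (l : List (Finset α)) {k : ℕ} (hk : k < l.length) :
    U \ unionList (l.take (k + 1)) = (U \ unionList (l.take k)) \ l[k] := by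
  rw [List.take_add_one, List.getElem?_eq_getElem hk, Option.toList_some, unionList_concat,
    sdiff_sdiff_left, sup_eq_union]

theorem card_le_card_mul_card_inter_of_forall_card_inter_le {α : Type*} [DecidableEq α]
    {R g : Finset α} {T : Finset (Finset α)} (hcov : R ⊆ T.biUnion id)
    (hmax : ∀ s ∈ T, #(R ∩ s) ≤ #(R ∩ g)) :
    #R ≤ #T * #(R ∩ g) :=
  calc #R = #(R ∩ T.biUnion id) := by rw [inter_eq_left.2 hcov]
    _ = #(T.biUnion (R ∩ ·)) := by rw [inter_biUnion]; rfl
    _ ≤ ∑ s ∈ T, #(R ∩ s) := card_biUnion_le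
    _ ≤ ∑ _s ∈ T, #(R ∩ g) := sum_le_sum hmax
    _ = #T * #(R ∩ g) := by rw [sum_const, smul_eq_mul]

theorem card_sdiff_le_one_sub_inv_mul_card {α : Type*} [DecidableEq α] {R g : Finset α}
    {n : ℕ} (h : #R ≤ n * #(R ∩ g)) :
    (#(R \ g) : ℝ) ≤ (1 - 1 / n) * #R := by
  have hsplit : (#(R \ g) : ℝ) + #(R ∩ g) = #R := by exact_mod_cast card_sdiff_add_card_inter R g
  rcases Nat.eq_zero_or_pos n with rfl | hn
  · simp only [CharP.cast_eq_zero, div_zero, sub_zero, one_mul]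
    linarith [(#(R ∩ g)).cast_nonneg (α := ℝ)]
  · have hn' : (0 : ℝ) < n := by exact_mod_cast hn
    have : (#R : ℝ) / n ≤ #(R ∩ g) := by
      rw [div_le_iff₀ hn', mul_comm]; exact_mod_cast h
    rw [sub_mul, one_mul, one_div_mul_eq_div]
    linarith

theorem le_mul_log_of_one_le_mul_one_sub_inv_pow {x n : ℝ} {t : ℕ} (hn : 1 ≤ n)
    (h : 1 ≤ x * (1 - 1 / n) ^ t) : t ≤ n * Real.log x := by
  have hr : 0 ≤ 1 - 1 / n := by
    rw [sub_nonneg, div_le_one (by linarith)]; exact hn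
  have hpow : (1 - 1 / n) ^ t ≤ Real.exp (-(t / n)) := by
    calc (1 - 1 / n) ^ t ≤ Real.exp (-(1 / n)) ^ t := by
          gcongr; linarith [Real.add_one_le_exp (-(1 / n))]
      _ = Real.exp (-(t / n)) := by rw [← Real.exp_nat_mul]; ring_nf
  have hx : 0 < x := by
    by_contra! hx
    nlinarith [pow_nonneg hr t]
  have : Real.exp (t / n) ≤ x := by
    have := h.trans (mul_le_mul_of_nonneg_left hpow hx.le)
    rwa [Real.exp_neg, ← div_eq_mul_inv, one_le_div (Real.exp_pos _)] at this
  rw [← div_le_iff₀' (by linarith), Real.le_log_iff_exp_le hx]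
  exact this

/-- Greedy set cover, decay of the uncovered set: if `OPT` is the optimum cover size,
then after `t` greedy selections the number of still-uncovered elements is at most
`|U| · (1 − 1/OPT)^t`; consequently the greedy algorithm makes at most
`⌈OPT · ln |U|⌉ + OPT` selections. -/
theorem greedy_uncovered_decay {α : Type*} [DecidableEq α]
    (U : Finset α) (S : Finset (Finset α)) (OPT : ℕ)
    (hOPT : IsLeast {k | ∃ T ⊆ S, U ⊆ T.biUnion id ∧ T.card = k} OPT) :
    ∀ gs : List (Finset α),
      (∀ k, (h : k < gs.length) →
        gs[k]'h ∈ S ∧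
        (U \ unionList (gs.take k)).Nonempty ∧
        ∀ s ∈ S, ((U \ unionList (gs.take k)) ∩ s).card ≤
          ((U \ unionList (gs.take k)) ∩ gs[k]'h).card) →
      ((∀ t ≤ gs.length, ((U \ unionList (gs.take t)).card : ℝ) ≤
          (U.card : ℝ) * (1 - 1 / (OPT : ℝ)) ^ t) ∧
        gs.length ≤ ⌈(OPT : ℝ) * Real.log U.card⌉₊ + OPT) := by
  obtain ⟨⟨T, hTS, hTcov, rfl⟩, -⟩ := hOPT
  intro gs hgs
  have hstep : ∀ k < gs.length, (#(U \ unionList (gs.take (k + 1))) : ℝ) ≤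
      (1 - 1 / #T) * #(U \ unionList (gs.take k)) := fun k hk => by
    rw [sdiff_unionList_take_succ U gs hk]
    exact card_sdiff_le_one_sub_inv_mul_card <|
      card_le_card_mul_card_inter_of_forall_card_inter_le (sdiff_subset.trans hTcov)
        fun s hs => (hgs k hk).2.2 s (hTS hs)
  have hr : (0 : ℝ) ≤ 1 - 1 / #T := sub_nonneg.2 <| (one_div _).trans_le (Nat.cast_inv_le_one _)
  have hdecay : ∀ t ≤ gs.length, (#(U \ unionList (gs.take t)) : ℝ) ≤
      #U * (1 - 1 / #T) ^ t := fun t ht => by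
    simpa [unionList, mul_comm] using
      le_geom (u := fun t => (#(U \ unionList (gs.take t)) : ℝ)) hr t
        fun k hk => hstep k (by omega)
  refine ⟨hdecay, ?_⟩
  obtain hL | ⟨L, hL⟩ : gs.length = 0 ∨ ∃ L, gs.length = L + 1 := by cases gs.length <;> simp
  · simp [hL]
  have hne := (hgs L (by omega)).2.1
  have hT : 1 ≤ #T :=
    have ⟨s, hs, _⟩ := biUnion_nonempty.1 (hne.mono (sdiff_subset.trans hTcov))
    card_pos.2 ⟨s, hs⟩
  have hlast : (1 : ℝ) ≤ #U * (1 - 1 / #T) ^ L :=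
    (Nat.one_le_cast.2 (card_pos.2 hne)).trans (hdecay L (by omega))
  have hlog : (L : ℝ) ≤ ⌈(#T : ℝ) * Real.log #U⌉₊ :=
    (le_mul_log_of_one_le_mul_one_sub_inv_pow (Nat.one_le_cast.2 hT) hlast).trans (Nat.le_ceil _)
  have : L ≤ ⌈(#T : ℝ) * Real.log #U⌉₊ := by exact_mod_cast hlog
  omega
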